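/- arXiv:0907.2470 — 2 statements merged into one kernel-verified Lean document; each statement's English description precedes it below -/
import Mathlib

section
/- For every m ≥ 0, the function φ_m is convex, and φ_m is Lipschitz with Lipschitz constant (4m+4)/3 (i.e. |φ_m(s) − φ_m(t)| ≤ ((4m+4)/3)·|s − t| for all s, t ∈ I). -/
open scoped BigOperators

noncomputable section

attribute [local instance] Classical.propDecidable

/-- `I`: the set of dyadic rationals in `[0,1]`. -/
def dyadicI : Set ℚ := {t | 0 ≤ t ∧ t ≤ 1 ∧ ∃ i n : ℕ, t = (i : ℚ) / 2 ^ n}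

/-- `X` is the ℚ-vector space of functions `I → ℚ`. -/
abbrev X : Type := dyadicI → ℚ

lemma dyadicI_mem {i n : ℕ} (h : i ≤ 2 ^ n) : (i : ℚ) / 2 ^ n ∈ dyadicI := by
  refine ⟨by positivity, ?_, i, n, rfl⟩
  rw [div_le_one (by positivity)]
  exact_mod_cast h

lemma zero_mem_dyadicI : (0 : ℚ) ∈ dyadicI := by
  simpa using dyadicI_mem (i := 0) (n := 0) (by norm_num)

lemma one_mem_dyadicI : (1 : ℚ) ∈ dyadicI := by
  simpa using dyadicI_mem (i := 1) (n := 0) (by norm_num)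

lemma half_mem_dyadicI : (1 / 2 : ℚ) ∈ dyadicI := by
  have := dyadicI_mem (i := 1) (n := 1) (by norm_num)
  norm_num at this ⊢
  exact this

/-- Evaluation of `α : X` at a rational, extended by `0` off `I`. -/
def evI (α : X) (t : ℚ) : ℚ := if h : t ∈ dyadicI then α ⟨t, h⟩ else 0

/-- The map `T₀ : X → X`, `(T₀ α)(t) = α (t/2)`. -/
def T0 (α : X) : X := fun t => evI α (t.1 / 2)

/-- The map `T₁ : X → X`, `(T₁ α)(t) = α ((1+t)/2)`. -/
def T1 (α : X) : X := fun t => evI α ((1 + t.1) / 2)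

/-- Auxiliary recursion (on the exponent of the denominator) defining `α # β`. -/
def hashAux : ℕ → X → X → ℚ → ℚ
  | 0, α, β, t =>
      if t = 0 then 0 else (evI α 1 - evI α 0) * (evI β 1 - evI β 0)
  | n + 1, α, β, t =>
      if t ≤ 1 / 2 then
        hashAux n (T0 α) (T0 β) (2 * t) + hashAux n (T1 α) (T1 β) (2 * t)
      else
        hashAux n (T0 α) (T0 β) 1 + hashAux n (T1 α) (T1 β) 1 +
          hashAux n (T0 α) (T1 β) (2 * t - 1) + hashAux n (T1 α) (T0 β) (2 * t - 1)

/-- The product `α # β` on `X`. -/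
def hash (α β : X) : X := fun t => hashAux (padicValNat 2 t.1.den) α β t.1

/-- The element `t ↦ t` of `X`. -/
def tId : X := fun t => t.1

/-- The element `ε : t ↦ t − t²` of `X`. -/
def epsX : X := fun t => t.1 - t.1 ^ 2

/-- The constant function `1` in `X`. -/
def oneX : X := fun _ => (1 : ℚ)

/-- Convexity: `2α(i/q) ≥ α((i−1)/q) + α((i+1)/q)` for all powers of two `q = 2^n`, `0 < i < q`. -/
def ConvexX (α : X) : Prop :=
  ∀ n i : ℕ, 0 < i → i < 2 ^ n →
    evI α (((i : ℚ) - 1) / 2 ^ n) + evI α (((i : ℚ) + 1) / 2 ^ n)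
      ≤ 2 * evI α ((i : ℚ) / 2 ^ n)

/-- `α` is Lipschitz with constant `m`. -/
def LipschitzQ (m : ℚ) (α : X) : Prop :=
  ∀ s t : dyadicI, |α s - α t| ≤ m * |s.1 - t.1|

/-- The point `2^{-n}` of `I`. -/
def invPow (n : ℕ) : dyadicI :=
  ⟨1 / 2 ^ n, by simpa using dyadicI_mem (i := 1) (n := n) Nat.one_le_two_pow⟩

/-- `μ` is the Hilbert–Kunz multiplicity of `α`, i.e. `μ = lim 2^n α(2^{-n})`. -/
def IsHKmu (α : X) (μ : ℝ) : Prop :=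
  Filter.Tendsto (fun n : ℕ => ((2 ^ n * α (invPow n) : ℚ) : ℝ)) Filter.atTop (nhds μ)

/-- The series `S_α = Σ α(2^{-n}) (2w)^n = Σ (2^n α(2^{-n})) w^n`. -/
def hkSeries (α : X) : PowerSeries ℚ := PowerSeries.mk fun n => 2 ^ n * α (invPow n)

/-- Auxiliary recursion defining the functions `φ_m`. -/
def phiAux : ℕ → ℕ → ℚ → ℚ
  | 0, _, _ => 0
  | n + 1, m, t =>
      if t ≤ 1 / 2 then
        if m % 2 = 0 then (phiAux n (m + 1) (2 * t) + (8 * (m : ℚ) + 6) * t) / 8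
        else (phiAux n (m - 1) (2 * t) + ((2 * t) - (2 * t) ^ 2) + (8 * (m : ℚ) + 6) * t) / 8
      else
        if m = 0 then (phiAux n 0 (2 * t - 1) + 6 * (1 - t)) / 8
        else if m % 2 = 0 then
          (phiAux n (m - 1) (2 * t - 1) + ((2 * t - 1) - (2 * t - 1) ^ 2)
            + (8 * (m : ℚ) + 6) * (1 - t)) / 8
        else (phiAux n (m + 1) (2 * t - 1) + (8 * (m : ℚ) + 6) * (1 - t)) / 8

/-- The functions `φ_m ∈ X` of Definition 2.2. -/
def phiM (m : ℕ) : X := fun t => phiAux (padicValNat 2 t.1.den) m t.1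

/-- `ℕ` with the Nim-sum (bitwise XOR) as its (commutative) monoid operation. -/
def NimNat : Type := ℕ

instance : CommMonoid NimNat where
  mul a b := Nat.xor a b
  one := (0 : ℕ)
  mul_assoc := Nat.xor_assoc
  mul_comm := Nat.xor_comm
  one_mul := Nat.zero_xor
  mul_one := Nat.xor_zero

/-- The ring `Γ`: free `ℤ`-module on `λ₀, λ₁, …` with `λᵢλⱼ = λ_{i XOR j}`. -/
abbrev GammaZ : Type := MonoidAlgebra ℤ NimNat

/-- The ring `Γ_Q = Γ ⊗ ℚ`. -/
abbrev GammaQ : Type := MonoidAlgebra ℚ NimNat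

/-- The basis element `λᵢ` of `Γ`. -/
def lamZ (i : ℕ) : GammaZ := MonoidAlgebra.single (show NimNat from i) 1

/-- The basis element `λᵢ` of `Γ_Q`. -/
def lamQ (i : ℕ) : GammaQ := MonoidAlgebra.single (show NimNat from i) 1

/-- `δ_r = λ₀ − λ₁ + ⋯ + (−1)^{r−1} λ_{r−1}` in `Γ`. -/
def deltaZ (r : ℕ) : GammaZ := ∑ i ∈ Finset.range r, ((-1 : ℤ) ^ i) • lamZ i

/-- `δ_r` in `Γ_Q`. -/
def deltaQ (r : ℕ) : GammaQ := ∑ i ∈ Finset.range r, ((-1 : ℚ) ^ i) • lamQ i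

/-- `L_n(α) = Σ_{i=0}^{2^n−1} (α((i+1)/2^n) − α(i/2^n)) (−1)^i λᵢ ∈ Γ_Q`. -/
def Ln (n : ℕ) (α : X) : GammaQ :=
  ∑ i ∈ Finset.range (2 ^ n),
    ((-1 : ℚ) ^ i * (evI α (((i : ℚ) + 1) / 2 ^ n) - evI α ((i : ℚ) / 2 ^ n))) • lamQ i

/-- The Hilbert–Kunz function `φ_f ∈ X` of a power series `f`:
`φ_f(i/q) = q^{-r} · dim_F F[[u₁,…,u_r]]/(u₁^q,…,u_r^q,f^i)`. -/
def phiF {F : Type} [Field F] {σ : Type} (f : MvPowerSeries σ F) : X := fun t =>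
  ((Module.finrank F
      (MvPowerSeries σ F ⧸ Ideal.span
        (Set.range (fun j : σ => (MvPowerSeries.X j : MvPowerSeries σ F) ^ t.1.den)
          ∪ {f ^ t.1.num.toNat}))) : ℚ)
    / (t.1.den : ℚ) ^ (Nat.card σ)

/-- The natural inclusion `F[[u_j : j ∈ σ]] → F[[u_j : j ∈ τ]]` along an injection `e : σ → τ`. -/
def embPS {F : Type} [Field F] {σ τ : Type} (e : σ → τ) (f : MvPowerSeries σ F) :
    MvPowerSeries τ F := fun d =>
  if h : ∃ d' : σ →₀ ℕ, Finsupp.mapDomain e d' = d then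
    MvPowerSeries.coeff h.choose f
  else 0


/-!
In the paper's terminology "convex" means midpoint concave on each dyadic grid. The recursion
writes `φ_m` on either half of `I` as `φ_{m'}` of the doubled argument plus an affine term and a
nonnegative multiple of the concave `ε`, so concavity on the grid of mesh `2⁻ⁿ⁻¹` follows from
concavity on the grid of mesh `2⁻ⁿ`, except at the centre `1/2`. There it follows from the bounds
`φ_m(2⁻ⁿ) ≤ (4m+4)/3 · 2⁻ⁿ` and `φ_m(1 - 2⁻ⁿ) ≤ (4m+4)/3 · 2⁻ⁿ`, which survive the induction only in
the sharper, parity-dependent form with `4m+3` in place of `4m+4`. By concavity the increments of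
`φ_m` along a grid decrease, so they lie between the first one, `φ_m(2⁻ⁿ)`, and the last one,
`-φ_m(1 - 2⁻ⁿ)`; summing them gives the Lipschitz bound.
-/

lemma div_two_pow_le_one {n j : ℕ} (hj : j ≤ 2 ^ n) : (j : ℚ) / 2 ^ n ≤ 1 :=
  (div_le_one (by positivity)).2 (by exact_mod_cast hj)

lemma one_div_two_pow_le_one (n : ℕ) : (1 : ℚ) / 2 ^ n ≤ 1 := by
  simpa using div_two_pow_le_one (j := 1) Nat.one_le_two_pow

lemma le_two_pow_of_div_le_one {n j : ℕ} (h : (j : ℚ) / 2 ^ n ≤ 1) : j ≤ 2 ^ n := by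
  rw [div_le_one (by positivity)] at h
  exact_mod_cast h

section Sequence

variable {α : Type*} [AddCommGroup α] [LinearOrder α] [IsOrderedAddMonoid α]

lemma succ_sub_le_succ_sub_of_midpoint_le {f : ℕ → α} {N : ℕ}
    (hf : ∀ i, i + 2 ≤ N → f i + f (i + 2) ≤ f (i + 1) + f (i + 1)) {i j : ℕ} (hij : i ≤ j)
    (hj : j < N) : f (j + 1) - f j ≤ f (i + 1) - f i := by
  induction j, hij using Nat.le_induction with
  | base => exact le_rfl
  | succ j hij ih =>
    have := hf j (by omega)
    calc f (j + 1 + 1) - f (j + 1) ≤ f (j + 1) - f j := by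
          rw [sub_le_sub_iff, add_comm (f (j + 1 + 1))]; exact this
      _ ≤ f (i + 1) - f i := ih (by omega)

lemma abs_sub_le_nsmul_of_abs_succ_sub_le {f : ℕ → α} {N : ℕ} {L : α}
    (hf : ∀ i < N, |f (i + 1) - f i| ≤ L) {a b : ℕ} (hab : a ≤ b) (hb : b ≤ N) :
    |f b - f a| ≤ (b - a) • L := by
  induction b, hab using Nat.le_induction with
  | base => simp
  | succ b hab ih =>
    calc |f (b + 1) - f a| ≤ |f (b + 1) - f b| + |f b - f a| := abs_sub_le _ _ _
      _ ≤ L + (b - a) • L := add_le_add (hf b (by omega)) (ih (by omega))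
      _ = (b + 1 - a) • L := by rw [Nat.sub_add_comm hab, succ_nsmul', add_comm]

end Sequence

lemma phiAux_at_zero (n m : ℕ) : phiAux n m 0 = 0 := by
  induction n generalizing m with
  | zero => rfl
  | succ n ih => simp [phiAux, ih]

lemma phiAux_at_one (n m : ℕ) : phiAux n m 1 = 0 := by
  induction n generalizing m with
  | zero => rfl
  | succ n ih => norm_num [phiAux, ih]

lemma phiAux_succ_half (n m : ℕ) {x : ℚ} (hx : x ≤ 1) :
    phiAux (n + 1) m (x / 2) =
      if m % 2 = 0 then (phiAux n (m + 1) x + (4 * m + 3) * x) / 8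
      else (phiAux n (m - 1) x + (x - x ^ 2) + (4 * m + 3) * x) / 8 := by
  rw [phiAux, if_pos (by linarith), mul_div_cancel₀ x two_ne_zero]
  split_ifs <;> ring

lemma phiAux_succ_one_add_half (n m : ℕ) {x : ℚ} (hx : 0 ≤ x) :
    phiAux (n + 1) m ((1 + x) / 2) =
      if m = 0 then (phiAux n 0 x + 3 * (1 - x)) / 8
      else if m % 2 = 0 then (phiAux n (m - 1) x + (x - x ^ 2) + (4 * m + 3) * (1 - x)) / 8
      else (phiAux n (m + 1) x + (4 * m + 3) * (1 - x)) / 8 := by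
  rcases hx.eq_or_lt with rfl | hx
  -- `(1 + 0) / 2 = 1 / 2` falls under the first clause of the definition
  · norm_num [phiAux, phiAux_at_zero, phiAux_at_one]
    split_ifs <;> simp_all <;> ring
  · have h : 2 * ((1 + x) / 2) - 1 = x := by ring
    rw [phiAux, if_neg (by linarith), h]
    split_ifs <;> ring

lemma dyadic_succ_cases {n j : ℕ} (hj : j ≤ 2 ^ (n + 1)) :
    (j ≤ 2 ^ n ∧ (j : ℚ) / 2 ^ (n + 1) = (j / 2 ^ n) / 2) ∨
      ∃ k : ℕ, k ≤ 2 ^ n ∧ (j : ℚ) / 2 ^ (n + 1) = (1 + k / 2 ^ n) / 2 := by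
  rcases le_or_gt j (2 ^ n) with hle | hgt
  · exact Or.inl ⟨hle, by rw [pow_succ, div_div]⟩
  · refine Or.inr ⟨j - 2 ^ n, by rw [pow_succ] at hj; omega, ?_⟩
    rw [Nat.cast_sub hgt.le]
    field_simp
    push_cast
    ring

lemma phiAux_succ_dyadic (n : ℕ) :
    ∀ m j : ℕ, j ≤ 2 ^ n → phiAux (n + 1) m (j / 2 ^ n) = phiAux n m (j / 2 ^ n) := by
  induction n with
  | zero =>
    intro m j hj
    interval_cases j <;> norm_num [phiAux_at_zero, phiAux_at_one]
  | succ n ih =>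
    intro m j hj
    rcases dyadic_succ_cases hj with ⟨hj, hx⟩ | ⟨k, hk, hx⟩
    · rw [hx, phiAux_succ_half _ _ (div_two_pow_le_one hj),
        phiAux_succ_half _ _ (div_two_pow_le_one hj)]
      simp only [ih _ j hj]
    · rw [hx, phiAux_succ_one_add_half _ _ (by positivity),
        phiAux_succ_one_add_half _ _ (by positivity)]
      simp only [ih _ k hk]

lemma phiAux_add_dyadic (n k m : ℕ) {j : ℕ} (hj : j ≤ 2 ^ n) :
    phiAux (n + k) m (j / 2 ^ n) = phiAux n m (j / 2 ^ n) := by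
  induction k with
  | zero => rfl
  | succ k ih =>
    have hx : (j : ℚ) / 2 ^ n = ((j * 2 ^ k : ℕ) : ℚ) / 2 ^ (n + k) := by
      push_cast
      rw [pow_add, mul_div_mul_right _ _ (by positivity)]
    have hjk : j * 2 ^ k ≤ 2 ^ (n + k) := by
      rw [pow_add]
      exact Nat.mul_le_mul_right _ hj
    rw [← add_assoc, hx, phiAux_succ_dyadic _ _ _ hjk, ← hx, ih]

lemma phiAux_eq_of_dyadic {n n' j j' m : ℕ} (hj : j ≤ 2 ^ n) (hj' : j' ≤ 2 ^ n')
    (h : (j : ℚ) / 2 ^ n = j' / 2 ^ n') :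
    phiAux n m (j / 2 ^ n) = phiAux n' m (j' / 2 ^ n') := by
  rw [← phiAux_add_dyadic n n' m hj, ← phiAux_add_dyadic n' n m hj', h, add_comm]

lemma exists_den_eq_two_pow_of_mem_dyadicI {s : ℚ} (hs : s ∈ dyadicI) :
    ∃ a : ℕ, s.den = 2 ^ a := by
  obtain ⟨-, -, j, n, hs⟩ := hs
  have hden : s.den ∣ 2 ^ n := by
    have := Rat.mul_den_dvd j (2 ^ n)⁻¹
    rwa [← div_eq_mul_inv, ← hs, Rat.den_natCast, one_mul, ← Nat.cast_ofNat, ← Nat.cast_pow,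
      Rat.inv_natCast_den, if_neg (by positivity)] at this
  obtain ⟨a, -, ha⟩ := (Nat.dvd_prime_pow Nat.prime_two).1 hden
  exact ⟨a, ha⟩

lemma phiM_eq_phiAux (m : ℕ) (s : dyadicI) {n j : ℕ} (hj : j ≤ 2 ^ n) (hs : s.1 = j / 2 ^ n) :
    phiM m s = phiAux n m s := by
  obtain ⟨a, ha⟩ := exists_den_eq_two_pow_of_mem_dyadicI s.2
  have hnum : ((s.1.num.toNat : ℕ) : ℚ) = s.1.num := by
    exact_mod_cast Int.toNat_of_nonneg (Rat.num_nonneg.2 s.2.1)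
  have hs' : s.1 = (s.1.num.toNat : ℚ) / 2 ^ a := by
    rw [hnum, ← Nat.cast_ofNat, ← Nat.cast_pow, ← ha]
    exact (Rat.num_div_den _).symm
  have hle : s.1.num.toNat ≤ 2 ^ a := by
    have h1 := s.2.2.1
    rw [hs', div_le_one (by positivity)] at h1
    exact_mod_cast h1
  have h := phiAux_eq_of_dyadic (m := m) hle hj (hs'.symm.trans hs)
  rw [← hs', ← hs] at h
  show phiAux (padicValNat 2 s.1.den) m s.1 = _
  rw [ha, padicValNat.prime_pow, h]

lemma phiAux_inv_two_pow_le (n : ℕ) : ∀ m : ℕ,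
    phiAux n m (1 / 2 ^ n) ≤ (4 * m + 4) / 3 * (1 / 2 ^ n) ∧
      (m % 2 = 1 → phiAux n m (1 / 2 ^ n) ≤ (4 * m + 3) / 3 * (1 / 2 ^ n)) := by
  induction n with
  | zero => exact fun m => ⟨by simp [phiAux]; positivity, fun _ => by simp [phiAux]; positivity⟩
  | succ n ih =>
    intro m
    set u : ℚ := 1 / 2 ^ n
    have hu : 0 ≤ u := by positivity
    have hu1 : u ≤ 1 := one_div_two_pow_le_one n
    rw [show (1 : ℚ) / 2 ^ (n + 1) = u / 2 by rw [pow_succ, div_div], phiAux_succ_half n m hu1]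
    split_ifs with hm
    · have h := (ih (m + 1)).2 (by omega)
      push_cast at h
      exact ⟨by linarith, by omega⟩
    · have h := (ih (m - 1)).1
      rw [Nat.cast_sub (by omega), Nat.cast_one] at h
      constructor <;> intros <;> linarith [sq_nonneg u]

lemma phiAux_one_sub_inv_two_pow_le (n : ℕ) : ∀ m : ℕ,
    phiAux n m (1 - 1 / 2 ^ n) ≤ (4 * m + 4) / 3 * (1 / 2 ^ n) ∧
      (m % 2 = 0 → phiAux n m (1 - 1 / 2 ^ n) ≤ (4 * m + 3) / 3 * (1 / 2 ^ n)) := by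
  induction n with
  | zero => exact fun m => ⟨by simp [phiAux]; positivity, fun _ => by simp [phiAux]; positivity⟩
  | succ n ih =>
    intro m
    set u : ℚ := 1 / 2 ^ n
    have hu : 0 ≤ u := by positivity
    have hu1 : u ≤ 1 := one_div_two_pow_le_one n
    rw [show (1 : ℚ) - 1 / 2 ^ (n + 1) = (1 + (1 - u)) / 2 by rw [pow_succ]; ring,
      show (1 : ℚ) / 2 ^ (n + 1) = u / 2 by rw [pow_succ, div_div],
      phiAux_succ_one_add_half n m (by linarith)]
    split_ifs with h0 hm
    · subst h0
      have h := (ih 0).2 rfl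
      norm_num at h ⊢
      constructor <;> linarith
    · have h := (ih (m - 1)).1
      rw [Nat.cast_sub (by omega), Nat.cast_one] at h
      constructor <;> intros <;> linarith [sq_nonneg u]
    · have h := (ih (m + 1)).2 (by omega)
      push_cast at h
      exact ⟨by linarith, by omega⟩

lemma phiAux_succ_midpoint_half {n : ℕ} {x u : ℚ} (hu : 0 ≤ u) (hxu : x + u ≤ 1)
    (h : ∀ m, phiAux n m (x - u) + phiAux n m (x + u) ≤ 2 * phiAux n m x) (m : ℕ) :
    phiAux (n + 1) m ((x - u) / 2) + phiAux (n + 1) m ((x + u) / 2) ≤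
      2 * phiAux (n + 1) m (x / 2) := by
  rw [phiAux_succ_half n m (by linarith), phiAux_succ_half n m hxu,
    phiAux_succ_half n m (by linarith)]
  split_ifs
  · linear_combination h (m + 1) / 8
  -- the second difference of `ε` with step `u` is `-2u²`
  · linear_combination h (m - 1) / 8 + sq_nonneg u / 4

lemma phiAux_succ_midpoint_one_add_half {n : ℕ} {x u : ℚ} (hu : 0 ≤ u) (hxu : 0 ≤ x - u)
    (h : ∀ m, phiAux n m (x - u) + phiAux n m (x + u) ≤ 2 * phiAux n m x) (m : ℕ) :
    phiAux (n + 1) m ((1 + (x - u)) / 2) + phiAux (n + 1) m ((1 + (x + u)) / 2) ≤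
      2 * phiAux (n + 1) m ((1 + x) / 2) := by
  rw [phiAux_succ_one_add_half n m hxu, phiAux_succ_one_add_half n m (by linarith),
    phiAux_succ_one_add_half n m (by linarith)]
  split_ifs
  · linear_combination h 0 / 8
  · linear_combination h (m - 1) / 8 + sq_nonneg u / 4
  · linear_combination h (m + 1) / 8

lemma phiAux_succ_midpoint_center (n m : ℕ) :
    phiAux (n + 1) m ((1 - 1 / 2 ^ n) / 2) + phiAux (n + 1) m ((1 + 1 / 2 ^ n) / 2) ≤
      2 * phiAux (n + 1) m (1 / 2) := by
  set u : ℚ := 1 / 2 ^ n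
  have hu : 0 ≤ u := by positivity
  rw [phiAux_succ_half n m (by linarith), phiAux_succ_one_add_half n m hu,
    phiAux_succ_half n m le_rfl, phiAux_at_one, phiAux_at_one]
  split_ifs with hm2 hm0 hm0
  · subst hm0
    have hA := (phiAux_inv_two_pow_le n 0).1
    have hB := (phiAux_one_sub_inv_two_pow_le n 1).1
    push_cast at hA hB
    linarith
  · have hA := (phiAux_inv_two_pow_le n (m - 1)).1
    have hB := (phiAux_one_sub_inv_two_pow_le n (m + 1)).1
    rw [Nat.cast_sub (by omega)] at hA
    push_cast at hA hB
    linarith [mul_nonneg m.cast_nonneg hu, sq_nonneg u]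
  · omega
  · have hA := (phiAux_inv_two_pow_le n (m + 1)).1
    have hB := (phiAux_one_sub_inv_two_pow_le n (m - 1)).1
    rw [Nat.cast_sub (by omega)] at hB
    push_cast at hA hB
    linarith [mul_nonneg m.cast_nonneg hu, sq_nonneg u]

theorem phiAux_midpoint_le (n : ℕ) : ∀ i : ℕ, 0 < i → i < 2 ^ n → ∀ m,
    phiAux n m (i / 2 ^ n - 1 / 2 ^ n) + phiAux n m (i / 2 ^ n + 1 / 2 ^ n) ≤
      2 * phiAux n m (i / 2 ^ n) := by
  induction n with
  | zero => intro i hi hi'; omega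
  | succ n ih =>
    intro i hi hi' m
    have hu : (0 : ℚ) ≤ 1 / 2 ^ n := by positivity
    rcases lt_trichotomy i (2 ^ n) with hlt | rfl | hgt
    · have hxu : (i : ℚ) / 2 ^ n + 1 / 2 ^ n ≤ 1 := by
        rw [← add_div]; exact_mod_cast div_two_pow_le_one (j := i + 1) hlt
      convert phiAux_succ_midpoint_half hu hxu (ih i hi hlt) m using 3 <;> rw [pow_succ] <;> ring
    · convert phiAux_succ_midpoint_center n m using 3 <;> rw [pow_succ] <;> push_cast <;>
        field_simp
    · obtain ⟨k, rfl⟩ := Nat.exists_eq_add_of_lt hgt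
      have hk' : k + 1 < 2 ^ n := by rw [pow_succ] at hi'; omega
      have hxu : (0 : ℚ) ≤ ((k + 1 : ℕ) : ℚ) / 2 ^ n - 1 / 2 ^ n := by
        rw [← sub_div]; push_cast; rw [add_sub_cancel_right]; positivity
      convert phiAux_succ_midpoint_one_add_half hu hxu (ih (k + 1) k.succ_pos hk') m using 3 <;>
        rw [pow_succ] <;> push_cast <;> field_simp <;> ring

lemma phiAux_grid_concave (n m : ℕ) {i : ℕ} (hi : i + 2 ≤ 2 ^ n) :
    phiAux n m (i / 2 ^ n) + phiAux n m ((i + 2 : ℕ) / 2 ^ n) ≤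
      phiAux n m ((i + 1 : ℕ) / 2 ^ n) + phiAux n m ((i + 1 : ℕ) / 2 ^ n) := by
  rw [← two_mul]
  convert phiAux_midpoint_le n (i + 1) i.succ_pos (by omega) m using 3 <;> push_cast <;> ring

lemma abs_phiAux_grid_succ_sub_le (n m : ℕ) {i : ℕ} (hi : i < 2 ^ n) :
    |phiAux n m ((i + 1 : ℕ) / 2 ^ n) - phiAux n m (i / 2 ^ n)| ≤
      (4 * m + 4) / 3 * (1 / 2 ^ n) := by
  have hg := fun i (hi : i + 2 ≤ 2 ^ n) => phiAux_grid_concave n m hi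
  have hfirst : phiAux n m ((0 + 1 : ℕ) / 2 ^ n) - phiAux n m ((0 : ℕ) / 2 ^ n) =
      phiAux n m (1 / 2 ^ n) := by
    simp [phiAux_at_zero]
  have hlast : phiAux n m ((2 ^ n - 1 + 1 : ℕ) / 2 ^ n) - phiAux n m ((2 ^ n - 1 : ℕ) / 2 ^ n) =
      -phiAux n m (1 - 1 / 2 ^ n) := by
    rw [Nat.sub_add_cancel Nat.one_le_two_pow, Nat.cast_sub Nat.one_le_two_pow, sub_div]
    push_cast
    rw [div_self (by positivity), phiAux_at_one, zero_sub]
  have hlow := succ_sub_le_succ_sub_of_midpoint_le hg (i := i) (j := 2 ^ n - 1) (by omega)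
    (by omega)
  have hup := succ_sub_le_succ_sub_of_midpoint_le hg (i := 0) (j := i) i.zero_le hi
  rw [abs_le]
  constructor
  · linarith [(phiAux_one_sub_inv_two_pow_le n m).1]
  · linarith [(phiAux_inv_two_pow_le n m).1]

lemma abs_phiAux_grid_sub_le (n m : ℕ) {a b : ℕ} (ha : a ≤ 2 ^ n) (hb : b ≤ 2 ^ n) :
    |phiAux n m (a / 2 ^ n) - phiAux n m (b / 2 ^ n)| ≤
      (4 * m + 4) / 3 * |(a : ℚ) / 2 ^ n - b / 2 ^ n| := by
  wlog hab : b ≤ a generalizing a b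
  · rw [abs_sub_comm, abs_sub_comm (a / 2 ^ n : ℚ)]
    exact this hb ha (by omega)
  have h := abs_sub_le_nsmul_of_abs_succ_sub_le (f := fun i : ℕ => phiAux n m (i / 2 ^ n))
    (fun i hi => abs_phiAux_grid_succ_sub_le n m hi) hab ha
  have hba : (b : ℚ) / 2 ^ n ≤ a / 2 ^ n := by gcongr
  rw [nsmul_eq_mul, Nat.cast_sub hab] at h
  rw [abs_of_nonneg (sub_nonneg.2 hba)]
  exact h.trans_eq (by ring)

lemma exists_common_dyadic_level (s t : dyadicI) :
    ∃ n a b : ℕ, a ≤ 2 ^ n ∧ b ≤ 2 ^ n ∧ s.1 = a / 2 ^ n ∧ t.1 = b / 2 ^ n := by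
  obtain ⟨-, hs1, i, p, hs⟩ := s.2
  obtain ⟨-, ht1, j, q, ht⟩ := t.2
  have hs' : s.1 = ((i * 2 ^ q : ℕ) : ℚ) / 2 ^ (p + q) := by
    rw [hs, pow_add]; push_cast; rw [mul_div_mul_right _ _ (by positivity)]
  have ht' : t.1 = ((j * 2 ^ p : ℕ) : ℚ) / 2 ^ (p + q) := by
    rw [ht, pow_add, mul_comm (2 ^ p : ℚ)]
    push_cast
    rw [mul_div_mul_right _ _ (by positivity)]
  exact ⟨p + q, _, _, le_two_pow_of_div_le_one (hs' ▸ hs1), le_two_pow_of_div_le_one (ht' ▸ ht1),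
    hs', ht'⟩

lemma evI_phiM (m : ℕ) {n j : ℕ} (hj : j ≤ 2 ^ n) :
    evI (phiM m) (j / 2 ^ n) = phiAux n m (j / 2 ^ n) := by
  rw [evI, dif_pos (dyadicI_mem hj)]
  exact phiM_eq_phiAux m _ hj rfl

theorem convexX_phiM (m : ℕ) : ConvexX (phiM m) := by
  intro n i hi hi'
  have hprev : (i : ℚ) - 1 = ((i - 1 : ℕ) : ℚ) := by rw [Nat.cast_sub hi, Nat.cast_one]
  have hnext : (i : ℚ) + 1 = ((i + 1 : ℕ) : ℚ) := by push_cast; rfl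
  rw [hprev, hnext, evI_phiM m (by omega), evI_phiM m (by omega), evI_phiM m hi'.le, ← hprev,
    ← hnext, sub_div, add_div]
  exact phiAux_midpoint_le n i hi hi' m

theorem lipschitzQ_phiM (m : ℕ) : LipschitzQ ((4 * m + 4) / 3) (phiM m) := by
  intro s t
  obtain ⟨n, a, b, ha, hb, hs, ht⟩ := exists_common_dyadic_level s t
  rw [phiM_eq_phiAux m s ha hs, phiM_eq_phiAux m t hb ht, hs, ht]
  exact abs_phiAux_grid_sub_le n m ha hb

/-- Theorem 2.10: each `φ_m` is convex and Lipschitz with Lipschitz constant `(4m+4)/3`. -/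
theorem statement15 (m : ℕ) :
    ConvexX (phiM m) ∧ LipschitzQ ((4 * (m : ℚ) + 4) / 3) (phiM m) :=
  ⟨convexX_phiM m, lipschitzQ_phiM m⟩
end
end

section
/- If V₁ and V₂ are finite-dimensional subspaces of X each stable under T₀ and T₁, then the subspace of X spanned by the constant function 1 together with all products α # β with α ∈ V₁ and β ∈ V₂ is finite-dimensional and stable under T₀ and T₁. In particular, if α, β ∈ X each lie in finite-dimensional subspaces of X stable under T₀ and T₁, then so does α # β. -/
open scoped BigOperators

noncomputable section

attribute [local instance] Classical.propDecidable

/-!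
Unfolding the recursion once gives
`T₀(α # β) = T₀α # T₀β + T₁α # T₁β` and
`T₁(α # β) = c • 1 + T₀α # T₁β + T₁α # T₀β` with `c = (T₀α # T₀β)(1) + (T₁α # T₁β)(1)`,
so `T₀` and `T₁` send each generator of the span into the span. Since `#` is bilinear, the span is
`ℚ ∙ 1 ⊔ map₂ (#) V₁ V₂`, which is finite-dimensional. The one technical point is that the
recursion computes `(α # β)(t)` at every level `n` with `2ⁿ t ∈ ℤ`, not only at the minimal one.
-/

lemma div_two_mem_dyadicI {t : ℚ} (h : t ∈ dyadicI) : t / 2 ∈ dyadicI := by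
  obtain ⟨h0, h1, i, n, rfl⟩ := h
  exact ⟨by linarith, by linarith, i, n + 1, by rw [pow_succ]; ring⟩

lemma one_add_div_two_mem_dyadicI {t : ℚ} (h : t ∈ dyadicI) : (1 + t) / 2 ∈ dyadicI := by
  obtain ⟨h0, h1, i, n, rfl⟩ := h
  refine ⟨by linarith, by linarith, 2 ^ n + i, n + 1, ?_⟩
  push_cast
  field_simp
  ring

lemma evI_of_mem (α : X) {t : ℚ} (h : t ∈ dyadicI) : evI α t = α ⟨t, h⟩ := dif_pos h

lemma evI_add (α α' : X) (t : ℚ) : evI (α + α') t = evI α t + evI α' t := by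
  unfold evI
  split_ifs <;> simp

lemma evI_smul (c : ℚ) (α : X) (t : ℚ) : evI (c • α) t = c * evI α t := by
  unfold evI
  split_ifs <;> simp

lemma T0_add (α α' : X) : T0 (α + α') = T0 α + T0 α' :=
  funext fun _ => evI_add _ _ _

lemma T1_add (α α' : X) : T1 (α + α') = T1 α + T1 α' :=
  funext fun _ => evI_add _ _ _

lemma T0_smul (c : ℚ) (α : X) : T0 (c • α) = c • T0 α :=
  funext fun _ => evI_smul _ _ _

lemma T1_smul (c : ℚ) (α : X) : T1 (c • α) = c • T1 α :=
  funext fun _ => evI_smul _ _ _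

def T0L : X →ₗ[ℚ] X where
  toFun := T0
  map_add' := T0_add
  map_smul' := T0_smul

def T1L : X →ₗ[ℚ] X where
  toFun := T1
  map_add' := T1_add
  map_smul' := T1_smul

lemma T0_oneX : T0 oneX = oneX :=
  funext fun s => evI_of_mem oneX (div_two_mem_dyadicI s.2)

lemma T1_oneX : T1 oneX = oneX :=
  funext fun s => evI_of_mem oneX (one_add_div_two_mem_dyadicI s.2)

lemma increment_T0_add_increment_T1 (α : X) :
    (evI (T0 α) 1 - evI (T0 α) 0) + (evI (T1 α) 1 - evI (T1 α) 0) = evI α 1 - evI α 0 := by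
  rw [evI_of_mem _ one_mem_dyadicI, evI_of_mem _ zero_mem_dyadicI,
    evI_of_mem _ one_mem_dyadicI, evI_of_mem _ zero_mem_dyadicI]
  show evI α (1 / 2) - evI α (0 / 2) + (evI α ((1 + 1) / 2) - evI α ((1 + 0) / 2)) = _
  norm_num

lemma hashAux_add_left (n : ℕ) (α α' β : X) (t : ℚ) :
    hashAux n (α + α') β t = hashAux n α β t + hashAux n α' β t := by
  induction n generalizing α α' β t with
  | zero => simp only [hashAux, evI_add]; split_ifs <;> ring
  | succ n ih => simp only [hashAux, T0_add, T1_add, ih]; split_ifs <;> ring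

lemma hashAux_add_right (n : ℕ) (α β β' : X) (t : ℚ) :
    hashAux n α (β + β') t = hashAux n α β t + hashAux n α β' t := by
  induction n generalizing α β β' t with
  | zero => simp only [hashAux, evI_add]; split_ifs <;> ring
  | succ n ih => simp only [hashAux, T0_add, T1_add, ih]; split_ifs <;> ring

lemma hashAux_smul_left (n : ℕ) (c : ℚ) (α β : X) (t : ℚ) :
    hashAux n (c • α) β t = c * hashAux n α β t := by
  induction n generalizing α β t with
  | zero => simp only [hashAux, evI_smul]; split_ifs <;> ring
  | succ n ih => simp only [hashAux, T0_smul, T1_smul, ih]; split_ifs <;> ring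

lemma hashAux_smul_right (n : ℕ) (c : ℚ) (α β : X) (t : ℚ) :
    hashAux n α (c • β) t = c * hashAux n α β t := by
  induction n generalizing α β t with
  | zero => simp only [hashAux, evI_smul]; split_ifs <;> ring
  | succ n ih => simp only [hashAux, T0_smul, T1_smul, ih]; split_ifs <;> ring

def hashL : X →ₗ[ℚ] X →ₗ[ℚ] X :=
  LinearMap.mk₂ ℚ hash
    (fun α α' β => funext fun t => hashAux_add_left _ α α' β t.1)
    (fun c α β => funext fun t => hashAux_smul_left _ c α β t.1)
    (fun α β β' => funext fun t => hashAux_add_right _ α β β' t.1)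
    (fun c α β => funext fun t => hashAux_smul_right _ c α β t.1)

lemma hashAux_succ {n : ℕ} (α β : X) {t : ℚ} (h0 : 0 ≤ t) (h1 : t ≤ 1)
    (ht : ∃ m : ℤ, t = m / 2 ^ n) :
    hashAux (n + 1) α β t = hashAux n α β t := by
  induction n generalizing α β t with
  | zero =>
    obtain ⟨m, rfl⟩ := ht
    norm_num at h0 h1 ⊢
    obtain rfl | rfl : m = 0 ∨ m = 1 := by
      have : 0 ≤ m ∧ m ≤ 1 := ⟨by exact_mod_cast h0, by exact_mod_cast h1⟩
      omega
    · simp [hashAux]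
    · norm_num [hashAux]
      rw [← increment_T0_add_increment_T1 α, ← increment_T0_add_increment_T1 β]
      ring
  | succ n ih =>
    obtain ⟨m, rfl⟩ := ht
    have h2t : ∃ m' : ℤ, 2 * (m / 2 ^ (n + 1) : ℚ) = m' / 2 ^ n :=
      ⟨m, by rw [pow_succ]; field_simp⟩
    have h2t1 : ∃ m' : ℤ, 2 * (m / 2 ^ (n + 1) : ℚ) - 1 = m' / 2 ^ n :=
      ⟨m - 2 ^ n, by rw [pow_succ]; push_cast; field_simp⟩
    have h1' : ∃ m' : ℤ, (1 : ℚ) = m' / 2 ^ n := ⟨2 ^ n, by push_cast; field_simp⟩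
    rw [hashAux]
    split_ifs with hle
    · rw [ih _ _ (by linarith) (by linarith) h2t, ih _ _ (by linarith) (by linarith) h2t,
        hashAux, if_pos hle]
    · rw [ih _ _ (by linarith) (by linarith) h2t1, ih _ _ (by linarith) (by linarith) h2t1,
        ih _ _ zero_le_one le_rfl h1', ih _ _ zero_le_one le_rfl h1', hashAux, if_neg hle]

lemma hashAux_eq_of_le {j n : ℕ} (hjn : j ≤ n) (α β : X) {t : ℚ} (h0 : 0 ≤ t) (h1 : t ≤ 1)
    {m : ℤ} (hm : t = m / 2 ^ j) :
    hashAux n α β t = hashAux j α β t := by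
  induction n, hjn using Nat.le_induction with
  | base => rfl
  | succ k hjk ih =>
    refine (hashAux_succ α β h0 h1 ⟨m * 2 ^ (k - j), ?_⟩).trans ih
    rw [hm, ← Nat.sub_add_cancel hjk, pow_add, Nat.add_sub_cancel]
    push_cast
    field_simp

lemma hash_apply (α β : X) {t : ℚ} (h : t ∈ dyadicI) {n : ℕ} {m : ℤ} (hm : t = m / 2 ^ n) :
    hash α β ⟨t, h⟩ = hashAux n α β t := by
  have hdvd : t.den ∣ 2 ^ n := by
    have := Rat.den_dvd m (2 ^ n)
    rw [Rat.divInt_eq_div, Int.cast_pow, Int.cast_ofNat, ← hm] at this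
    exact_mod_cast this
  obtain ⟨j, hjn, hden⟩ := (Nat.dvd_prime_pow Nat.prime_two).mp hdvd
  have htj : t = t.num / 2 ^ j := by
    rw [← Nat.cast_ofNat, ← Nat.cast_pow, ← hden, Rat.num_div_den]
  show hashAux (padicValNat 2 t.den) α β t = _
  rw [hden, padicValNat.prime_pow, hashAux_eq_of_le hjn α β h.1 h.2.1 htj]

lemma hashAux_zero (n : ℕ) (α β : X) : hashAux n α β 0 = 0 := by
  induction n generalizing α β with
  | zero => simp [hashAux]
  | succ n ih => norm_num [hashAux, ih]

lemma hashAux_one (n : ℕ) (α β : X) : hashAux n α β 1 = hash α β ⟨1, one_mem_dyadicI⟩ :=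
  (hash_apply α β one_mem_dyadicI (m := 2 ^ n) (by push_cast; field_simp)).symm

lemma T0_hash (α β : X) : T0 (hash α β) = hash (T0 α) (T0 β) + hash (T1 α) (T1 β) := by
  funext ⟨t, ht⟩
  obtain ⟨h0, h1, i, n, hti⟩ := id ht
  have hi : t = (i : ℤ) / 2 ^ n := by rw [hti]; push_cast; rfl
  show evI (hash α β) (t / 2) = hash (T0 α) (T0 β) ⟨t, ht⟩ + hash (T1 α) (T1 β) ⟨t, ht⟩
  rw [evI_of_mem _ (div_two_mem_dyadicI ht), hash_apply _ _ ht hi, hash_apply _ _ ht hi,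
    hash_apply _ _ _ (n := n + 1) (m := i) (by rw [hi, pow_succ]; ring), hashAux,
    if_pos (by linarith), mul_div_cancel₀ t two_ne_zero]

lemma T1_hash (α β : X) :
    T1 (hash α β) =
      (hash (T0 α) (T0 β) ⟨1, one_mem_dyadicI⟩ + hash (T1 α) (T1 β) ⟨1, one_mem_dyadicI⟩) • oneX
        + hash (T0 α) (T1 β) + hash (T1 α) (T0 β) := by
  funext ⟨t, ht⟩
  obtain ⟨h0, h1, i, n, hti⟩ := id ht
  have hi : t = (i : ℤ) / 2 ^ n := by rw [hti]; push_cast; rfl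
  show evI (hash α β) ((1 + t) / 2) =
    (hash (T0 α) (T0 β) ⟨1, one_mem_dyadicI⟩ + hash (T1 α) (T1 β) ⟨1, one_mem_dyadicI⟩) * 1
      + hash (T0 α) (T1 β) ⟨t, ht⟩ + hash (T1 α) (T0 β) ⟨t, ht⟩
  rw [evI_of_mem _ (one_add_div_two_mem_dyadicI ht), hash_apply _ _ ht hi, hash_apply _ _ ht hi,
    hash_apply _ _ _ (n := n + 1) (m := 2 ^ n + i) (by rw [hi, pow_succ]; push_cast; field_simp),
    hashAux]
  split_ifs with hle
  · obtain rfl : t = 0 := by linarith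
    rw [show 2 * ((1 + 0) / 2) = (1 : ℚ) by norm_num, hashAux_zero, hashAux_zero,
      hashAux_one, hashAux_one]
    ring
  · rw [show 2 * ((1 + t) / 2) - 1 = t by ring, hashAux_one, hashAux_one]
    ring

theorem Submodule.finite_map₂ {R M N P : Type*} [CommSemiring R] [AddCommMonoid M]
    [AddCommMonoid N] [AddCommMonoid P] [Module R M] [Module R N] [Module R P]
    (f : M →ₗ[R] N →ₗ[R] P) (p : Submodule R M) (q : Submodule R N)
    [Module.Finite R p] [Module.Finite R q] : Module.Finite R (Submodule.map₂ f p q) :=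
  Module.Finite.iff_fg.mpr <|
    (Module.Finite.iff_fg.mp ‹_›).map₂ f (Module.Finite.iff_fg.mp ‹_›)

def hashSpan (V1 V2 : Submodule ℚ X) : Submodule ℚ X :=
  Submodule.span ℚ ({oneX} ∪ {x : X | ∃ α ∈ V1, ∃ β ∈ V2, x = hash α β})

section hashSpan

variable {V1 V2 : Submodule ℚ X}

lemma oneX_mem_hashSpan : oneX ∈ hashSpan V1 V2 :=
  Submodule.subset_span (Or.inl rfl)

lemma hash_mem_hashSpan {α β : X} (hα : α ∈ V1) (hβ : β ∈ V2) : hash α β ∈ hashSpan V1 V2 :=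
  Submodule.subset_span (Or.inr ⟨α, hα, β, hβ, rfl⟩)

lemma hashSpan_eq_sup_map₂ : hashSpan V1 V2 = (ℚ ∙ oneX) ⊔ Submodule.map₂ hashL V1 V2 := by
  rw [hashSpan, Submodule.span_union, Submodule.map₂_eq_span_image2]
  congr
  ext x
  simp [eq_comm, hashL]

instance finiteDimensional_hashSpan [FiniteDimensional ℚ V1] [FiniteDimensional ℚ V2] :
    FiniteDimensional ℚ (hashSpan V1 V2) := by
  have := Submodule.finite_map₂ hashL V1 V2
  rw [hashSpan_eq_sup_map₂]
  infer_instance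

lemma T0_mem_hashSpan (h10 : ∀ v ∈ V1, T0 v ∈ V1) (h11 : ∀ v ∈ V1, T1 v ∈ V1)
    (h20 : ∀ v ∈ V2, T0 v ∈ V2) (h21 : ∀ v ∈ V2, T1 v ∈ V2) {v : X} (hv : v ∈ hashSpan V1 V2) :
    T0 v ∈ hashSpan V1 V2 := by
  refine (Submodule.span_le (p := (hashSpan V1 V2).comap T0L)).mpr ?_ hv
  rintro _ (rfl | ⟨α, hα, β, hβ, rfl⟩)
  · show T0 oneX ∈ hashSpan V1 V2
    rw [T0_oneX]
    exact oneX_mem_hashSpan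
  · show T0 (hash α β) ∈ hashSpan V1 V2
    rw [T0_hash]
    exact add_mem (hash_mem_hashSpan (h10 α hα) (h20 β hβ))
      (hash_mem_hashSpan (h11 α hα) (h21 β hβ))

lemma T1_mem_hashSpan (h10 : ∀ v ∈ V1, T0 v ∈ V1) (h11 : ∀ v ∈ V1, T1 v ∈ V1)
    (h20 : ∀ v ∈ V2, T0 v ∈ V2) (h21 : ∀ v ∈ V2, T1 v ∈ V2) {v : X} (hv : v ∈ hashSpan V1 V2) :
    T1 v ∈ hashSpan V1 V2 := by
  refine (Submodule.span_le (p := (hashSpan V1 V2).comap T1L)).mpr ?_ hv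
  rintro _ (rfl | ⟨α, hα, β, hβ, rfl⟩)
  · show T1 oneX ∈ hashSpan V1 V2
    rw [T1_oneX]
    exact oneX_mem_hashSpan
  · show T1 (hash α β) ∈ hashSpan V1 V2
    rw [T1_hash]
    exact add_mem (add_mem (Submodule.smul_mem _ _ oneX_mem_hashSpan)
      (hash_mem_hashSpan (h10 α hα) (h21 β hβ))) (hash_mem_hashSpan (h11 α hα) (h20 β hβ))

end hashSpan

/-- Remark after Theorem 3.3 (case `p = 2`): if `V₁, V₂` are finite-dimensional subspaces of
`X` stable under `T₀` and `T₁`, then the span of `1` together with all `α # β` (`α ∈ V₁`,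
`β ∈ V₂`) is finite dimensional and stable under `T₀` and `T₁`; in particular `α # β` lies in a
finite-dimensional stable subspace whenever `α` and `β` do. -/
theorem statement19 (V1 V2 : Submodule ℚ X)
    (h1 : FiniteDimensional ℚ V1) (h2 : FiniteDimensional ℚ V2)
    (h10 : ∀ v ∈ V1, T0 v ∈ V1) (h11 : ∀ v ∈ V1, T1 v ∈ V1)
    (h20 : ∀ v ∈ V2, T0 v ∈ V2) (h21 : ∀ v ∈ V2, T1 v ∈ V2) :
    (∀ W : Submodule ℚ X,
      W = Submodule.span ℚ ({oneX} ∪ {x : X | ∃ α ∈ V1, ∃ β ∈ V2, x = hash α β}) →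
      FiniteDimensional ℚ W ∧ (∀ v ∈ W, T0 v ∈ W) ∧ (∀ v ∈ W, T1 v ∈ W)) ∧
    (∀ α β : X,
      (∃ W : Submodule ℚ X, FiniteDimensional ℚ W ∧
        (∀ v ∈ W, T0 v ∈ W) ∧ (∀ v ∈ W, T1 v ∈ W) ∧ α ∈ W) →
      (∃ W : Submodule ℚ X, FiniteDimensional ℚ W ∧
        (∀ v ∈ W, T0 v ∈ W) ∧ (∀ v ∈ W, T1 v ∈ W) ∧ β ∈ W) →
      ∃ W : Submodule ℚ X, FiniteDimensional ℚ W ∧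
        (∀ v ∈ W, T0 v ∈ W) ∧ (∀ v ∈ W, T1 v ∈ W) ∧ hash α β ∈ W) := by
  refine ⟨fun W hW => ?_, ?_⟩
  · subst hW
    exact ⟨inferInstanceAs (FiniteDimensional ℚ (hashSpan V1 V2)),
      fun _ => T0_mem_hashSpan h10 h11 h20 h21, fun _ => T1_mem_hashSpan h10 h11 h20 h21⟩
  · rintro α β ⟨W1, hW1, h10', h11', hα⟩ ⟨W2, hW2, h20', h21', hβ⟩
    exact ⟨hashSpan W1 W2, inferInstance, fun _ => T0_mem_hashSpan h10' h11' h20' h21',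
      fun _ => T1_mem_hashSpan h10' h11' h20' h21', hash_mem_hashSpan hα hβ⟩

end
end
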